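/- arXiv:2304.13793 — 2 statements merged into one kernel-verified Lean document; each statement's English description precedes it below -/
import Mathlib

section
/- For a symmetric positive definite matrix $\Gamma \in \mathbb{R}^{\kappa\times\kappa}$ and $p \in [1,\infty]$ with conjugate exponent $p_* = p/(p-1)$, we have $\min_{\|h\|_p = 1} h^T \Gamma h = \left[\max_{\|g\|_{p_*} \le 1} g^T \Gamma^{-1} g\right]^{-1}$. -/
/-!
Write `m` for the infimum and `M` for the supremum. Cauchy–Schwarz for the inner product
`⟪u, v⟫ = uᵀΓv`, applied to `h` and `Γ⁻¹g`, gives `(g ⬝ h)² ≤ (gᵀΓ⁻¹g)(hᵀΓh)`. Pairing a unit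
vector `h` with a norming functional `g` (`‖g‖_q ≤ 1`, `g ⬝ h = 1`) gives `1 ≤ M · hᵀΓh`.
Conversely, for `‖g‖_q ≤ 1` put `u = Γ⁻¹g`: then `uᵀΓu = gᵀΓ⁻¹g = g ⬝ u ≤ ‖u‖_p` by Hölder, so
the unit vector `u / ‖u‖_p` witnesses `m · gᵀΓ⁻¹g ≤ 1`. Compactness of the `ℓ_q` ball keeps `M`
finite, and the two inequalities force `m = M⁻¹`.
-/

open Matrix
open scoped ENNReal

/-- The `ℓ_p` norm of a vector in `ℝ^κ`, via the `PiLp` norm. -/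
noncomputable def lpNorm (p : ℝ≥0∞) [Fact (1 ≤ p)] {κ : ℕ} (x : Fin κ → ℝ) : ℝ :=
  ‖(WithLp.equiv p (Fin κ → ℝ)).symm x‖

lemma Real.sInf_eq_inv_sSup {S B : Set ℝ} (hS : S.Nonempty) (hS₀ : ∀ s ∈ S, 0 ≤ s)
    (hB : BddAbove B) (hSB : ∀ s ∈ S, ∃ b ∈ B, 1 ≤ b * s)
    (hBS : ∀ b ∈ B, 0 < b → ∃ s ∈ S, b * s ≤ 1) :
    sInf S = (sSup B)⁻¹ := by
  obtain ⟨s₀, hs₀⟩ := hS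
  have hB₀ : B.Nonempty := let ⟨b, hb, _⟩ := hSB s₀ hs₀; ⟨b, hb⟩
  have hSup_mul : ∀ s ∈ S, 1 ≤ sSup B * s := fun s hs =>
    let ⟨b, hb, hbs⟩ := hSB s hs
    hbs.trans (mul_le_mul_of_nonneg_right (le_csSup hB hb) (hS₀ s hs))
  have hSup_pos : 0 < sSup B := by
    by_contra! h
    nlinarith [hSup_mul s₀ hs₀, hS₀ s₀ hs₀]
  have hInf_ge : (sSup B)⁻¹ ≤ sInf S :=
    le_csInf ⟨s₀, hs₀⟩ fun s hs => (inv_le_iff_one_le_mul₀' hSup_pos).2 (hSup_mul s hs)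
  have hInf_pos : 0 < sInf S := (inv_pos.2 hSup_pos).trans_le hInf_ge
  have hSup_le : sSup B ≤ (sInf S)⁻¹ := csSup_le hB₀ fun b hb => by
    rcases le_or_gt b 0 with hb₀ | hb₀
    · exact hb₀.trans (inv_pos.2 hInf_pos).le
    obtain ⟨s, hs, hbs⟩ := hBS b hb hb₀
    rw [← one_div, le_div_iff₀ hInf_pos]
    exact (mul_le_mul_of_nonneg_left (csInf_le ⟨0, hS₀⟩ hs) hb₀.le).trans hbs
  exact le_antisymm ((le_inv_comm₀ hSup_pos hInf_pos).1 hSup_le) hInf_ge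

section QuadraticForm

variable {n : Type*} [Fintype n]

lemma Matrix.PosSemidef.dotProduct_mulVec_sq_le {M : Matrix n n ℝ} (hM : M.PosSemidef)
    (x y : n → ℝ) : (x ⬝ᵥ M *ᵥ y) ^ 2 ≤ (x ⬝ᵥ M *ᵥ x) * (y ⬝ᵥ M *ᵥ y) := by
  let := M.toSeminormedAddCommGroup hM
  let := M.toInnerProductSpace hM
  have hinner : ∀ u v : n → ℝ, (inner ℝ u v : ℝ) = u ⬝ᵥ M *ᵥ v := fun u v => by
    rw [dotProduct_comm]; rfl
  simpa only [hinner, sq] using real_inner_mul_inner_self_le x y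

lemma Matrix.PosDef.mulVec_inv_mulVec [DecidableEq n] {M : Matrix n n ℝ} (hM : M.PosDef)
    (g : n → ℝ) : M *ᵥ (M⁻¹ *ᵥ g) = g := by
  rw [mulVec_mulVec, mul_nonsing_inv M (M.isUnit_iff_isUnit_det.1 hM.isUnit), one_mulVec]

lemma Matrix.PosDef.dotProduct_sq_le [DecidableEq n] {M : Matrix n n ℝ} (hM : M.PosDef)
    (g h : n → ℝ) : (g ⬝ᵥ h) ^ 2 ≤ (g ⬝ᵥ M⁻¹ *ᵥ g) * (h ⬝ᵥ M *ᵥ h) := by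
  have := hM.posSemidef.dotProduct_mulVec_sq_le h (M⁻¹ *ᵥ g)
  rwa [hM.mulVec_inv_mulVec, dotProduct_comm h g, dotProduct_comm (M⁻¹ *ᵥ g), mul_comm] at this

end QuadraticForm

section LpNorm

variable {κ : ℕ} {p q : ℝ≥0∞} [Fact (1 ≤ p)] [Fact (1 ≤ q)]

lemma lpNorm_eq_norm_toLp (x : Fin κ → ℝ) : lpNorm p x = ‖WithLp.toLp p x‖ := rfl

lemma lpNorm_smul (c : ℝ) (x : Fin κ → ℝ) : lpNorm p (c • x) = |c| * lpNorm p x := by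
  rw [lpNorm_eq_norm_toLp, lpNorm_eq_norm_toLp, WithLp.toLp_smul, norm_smul, Real.norm_eq_abs]

lemma lpNorm_pos {x : Fin κ → ℝ} (hx : x ≠ 0) : 0 < lpNorm p x := by
  rw [lpNorm_eq_norm_toLp, norm_pos_iff]
  simpa using hx

lemma lpNorm_single (i : Fin κ) (a : ℝ) : lpNorm p (Pi.single i a) = |a| :=
  PiLp.norm_single p (fun _ => ℝ) i a

lemma lpNorm_one_eq_sum (x : Fin κ → ℝ) : lpNorm 1 x = ∑ i, |x i| := by
  simp [lpNorm_eq_norm_toLp, PiLp.norm_eq_of_L1]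

lemma lpNorm_top_eq_norm (x : Fin κ → ℝ) : lpNorm ∞ x = ‖x‖ := by
  simp [lpNorm_eq_norm_toLp]

lemma lpNorm_eq_sum (hp : p ≠ ∞) (x : Fin κ → ℝ) :
    lpNorm p x = (∑ i, |x i| ^ p.toReal) ^ p.toReal⁻¹ := by
  have hp₀ : 0 < p.toReal := ENNReal.toReal_pos (zero_lt_one.trans_le Fact.out).ne' hp
  simp [lpNorm_eq_norm_toLp, PiLp.norm_eq_sum hp₀]

lemma sum_rpow_eq_one_of_lpNorm_eq_one (hp : p ≠ ∞) {x : Fin κ → ℝ} (hx : lpNorm p x = 1) :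
    ∑ i, |x i| ^ p.toReal = 1 := by
  have hp₀ : p.toReal ≠ 0 := (ENNReal.toReal_pos (zero_lt_one.trans_le Fact.out).ne' hp).ne'
  rw [lpNorm_eq_sum hp] at hx
  rw [← Real.rpow_inv_rpow (x := ∑ i, |x i| ^ p.toReal) (by positivity) hp₀, hx, Real.one_rpow]

lemma exists_lpNorm_eq_one (hκ : 0 < κ) : ∃ x : Fin κ → ℝ, lpNorm p x = 1 :=
  ⟨Pi.single ⟨0, hκ⟩ 1, by rw [lpNorm_single, abs_one]⟩

lemma isCompact_setOf_lpNorm_le_one : IsCompact {x : Fin κ → ℝ | lpNorm p x ≤ 1} := by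
  have := (PiLp.continuousLinearEquiv p ℝ fun _ : Fin κ => ℝ).symm.toHomeomorph.isCompact_preimage.2
    (isCompact_closedBall 0 1)
  simpa [Set.preimage, lpNorm_eq_norm_toLp] using this

lemma dotProduct_le_lpNorm_one_mul_lpNorm_top (x y : Fin κ → ℝ) :
    x ⬝ᵥ y ≤ lpNorm 1 x * lpNorm ∞ y := by
  rw [lpNorm_one_eq_sum, lpNorm_top_eq_norm, Finset.sum_mul]
  refine Finset.sum_le_sum fun i _ => ?_
  calc x i * y i ≤ |x i| * |y i| := by rw [← abs_mul]; exact le_abs_self _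
    _ ≤ |x i| * ‖y‖ := by gcongr; exact norm_le_pi_norm y i

lemma dotProduct_le_lpNorm_mul_lpNorm [p.HolderConjugate q] (x y : Fin κ → ℝ) :
    x ⬝ᵥ y ≤ lpNorm p x * lpNorm q y := by
  rcases eq_or_ne p ∞ with rfl | hp
  · obtain rfl := (ENNReal.HolderConjugate.eq_top_iff_eq_one ∞ q).1 rfl
    rw [dotProduct_comm, mul_comm]
    exact dotProduct_le_lpNorm_one_mul_lpNorm_top y x
  rcases eq_or_ne q ∞ with rfl | hq
  · obtain rfl := (ENNReal.HolderConjugate.eq_top_iff_eq_one ∞ p).1 rfl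
    exact dotProduct_le_lpNorm_one_mul_lpNorm_top x y
  rw [lpNorm_eq_sum hp, lpNorm_eq_sum hq, ← one_div, ← one_div]
  exact Real.inner_le_Lp_mul_Lq _ x y (ENNReal.HolderConjugate.toReal_of_ne_top hp hq)

lemma abs_sign_le_one (a : ℝ) : |(SignType.sign a : ℝ)| ≤ 1 := by
  rcases lt_trichotomy a 0 with h | h | h <;> simp [h]

lemma exists_lpNorm_top_le_one_dotProduct_eq_one {x : Fin κ → ℝ} (hx : lpNorm 1 x = 1) :
    ∃ g : Fin κ → ℝ, lpNorm ∞ g ≤ 1 ∧ g ⬝ᵥ x = 1 := by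
  refine ⟨fun i => SignType.sign (x i), ?_, ?_⟩
  · rw [lpNorm_top_eq_norm, pi_norm_le_iff_of_nonneg zero_le_one]
    exact fun i => abs_sign_le_one (x i)
  · simp [dotProduct, ← hx, lpNorm_one_eq_sum]

lemma exists_lpNorm_one_le_one_dotProduct_eq_one {x : Fin κ → ℝ} (hx : lpNorm ∞ x = 1) :
    ∃ g : Fin κ → ℝ, lpNorm 1 g ≤ 1 ∧ g ⬝ᵥ x = 1 := by
  rw [lpNorm_top_eq_norm] at hx
  have : Nonempty (Fin κ) := by
    cases κ with
    | zero => rw [Subsingleton.elim x 0, norm_zero] at hx; exact absurd hx zero_ne_one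
    | succ k => exact ⟨0⟩
  obtain ⟨i, hi⟩ := (IsGreatest.pi_norm x).1
  refine ⟨Pi.single i (SignType.sign (x i)), ?_, ?_⟩
  · simpa [lpNorm_single] using abs_sign_le_one (x i)
  · simpa [hx] using hi

lemma exists_lpNorm_le_one_dotProduct_eq_one_of_ne_top [p.HolderConjugate q] (hp : p ≠ ∞)
    (hq : q ≠ ∞) {x : Fin κ → ℝ} (hx : lpNorm p x = 1) :
    ∃ g : Fin κ → ℝ, lpNorm q g ≤ 1 ∧ g ⬝ᵥ x = 1 := by
  have hpq := ENNReal.HolderConjugate.toReal_of_ne_top hp hq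
  have hsum := sum_rpow_eq_one_of_lpNorm_eq_one hp hx
  have hpow : ∀ a : ℝ, |a| ^ (p.toReal - 1) * |a| = |a| ^ p.toReal := fun a => by
    rw [← Real.rpow_add_one' (abs_nonneg a) (by linarith [hpq.pos]), sub_add_cancel]
  -- the equality case of Hölder's inequality
  refine ⟨fun i => SignType.sign (x i) * |x i| ^ (p.toReal - 1), le_of_eq ?_, ?_⟩
  · have hg : ∀ i, |(SignType.sign (x i) : ℝ) * |x i| ^ (p.toReal - 1)| ^ q.toReal
        = |x i| ^ p.toReal := fun i => by
      rcases eq_or_ne (x i) 0 with h | h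
      · simp [h, Real.zero_rpow hpq.pos.ne', Real.zero_rpow hpq.symm.pos.ne']
      · have hsign : |(SignType.sign (x i) : ℝ)| = 1 := by
          rcases h.lt_or_gt with h | h <;> simp [h]
        rw [abs_mul, hsign, one_mul, abs_of_nonneg (by positivity),
          ← Real.rpow_mul (abs_nonneg _), hpq.sub_one_mul_conj]
    simp_rw [lpNorm_eq_sum hq, hg, hsum, Real.one_rpow]
  · refine (Finset.sum_congr rfl fun i _ => ?_).trans hsum
    rw [← hpow, mul_right_comm, sign_mul_self, mul_comm]

lemma exists_lpNorm_le_one_dotProduct_eq_one [p.HolderConjugate q] {x : Fin κ → ℝ}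
    (hx : lpNorm p x = 1) : ∃ g : Fin κ → ℝ, lpNorm q g ≤ 1 ∧ g ⬝ᵥ x = 1 := by
  rcases eq_or_ne p ∞ with rfl | hp
  · obtain rfl := (ENNReal.HolderConjugate.eq_top_iff_eq_one ∞ q).1 rfl
    exact exists_lpNorm_one_le_one_dotProduct_eq_one hx
  rcases eq_or_ne q ∞ with rfl | hq
  · obtain rfl := (ENNReal.HolderConjugate.eq_top_iff_eq_one ∞ p).1 rfl
    exact exists_lpNorm_top_le_one_dotProduct_eq_one hx
  exact exists_lpNorm_le_one_dotProduct_eq_one_of_ne_top hp hq hx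

variable {Γ : Matrix (Fin κ) (Fin κ) ℝ}

lemma Matrix.PosDef.exists_lpNorm_le_one_one_le_mul [p.HolderConjugate q] (hΓ : Γ.PosDef)
    {h : Fin κ → ℝ} (hh : lpNorm p h = 1) :
    ∃ g : Fin κ → ℝ, lpNorm q g ≤ 1 ∧ 1 ≤ (g ⬝ᵥ Γ⁻¹ *ᵥ g) * (h ⬝ᵥ Γ *ᵥ h) := by
  obtain ⟨g, hg, hgh⟩ := exists_lpNorm_le_one_dotProduct_eq_one (q := q) hh
  exact ⟨g, hg, by simpa [hgh] using hΓ.dotProduct_sq_le g h⟩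

lemma Matrix.PosDef.exists_lpNorm_eq_one_mul_le_one [p.HolderConjugate q] (hΓ : Γ.PosDef)
    {g : Fin κ → ℝ} (hg : lpNorm q g ≤ 1) (hpos : 0 < g ⬝ᵥ Γ⁻¹ *ᵥ g) :
    ∃ h : Fin κ → ℝ, lpNorm p h = 1 ∧ (g ⬝ᵥ Γ⁻¹ *ᵥ g) * (h ⬝ᵥ Γ *ᵥ h) ≤ 1 := by
  set u := Γ⁻¹ *ᵥ g
  set c := g ⬝ᵥ u
  have hu : u ≠ 0 := by rintro hu; simp [c, hu] at hpos
  have hN := lpNorm_pos (p := p) hu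
  have hcN : c ≤ lpNorm p u := calc
    c ≤ lpNorm q g * lpNorm p u := dotProduct_le_lpNorm_mul_lpNorm g u
    _ ≤ lpNorm p u := mul_le_of_le_one_left hN.le hg
  have hquad : u ⬝ᵥ Γ *ᵥ u = c := by rw [hΓ.mulVec_inv_mulVec, dotProduct_comm]
  refine ⟨(lpNorm p u)⁻¹ • u, ?_, ?_⟩
  · rw [lpNorm_smul, abs_inv, abs_of_pos hN, inv_mul_cancel₀ hN.ne']
  · simp only [mulVec_smul, dotProduct_smul, smul_dotProduct, hquad, smul_eq_mul]
    calc c * ((lpNorm p u)⁻¹ * ((lpNorm p u)⁻¹ * c)) = (c / lpNorm p u) ^ 2 := by ring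
      _ ≤ 1 := pow_le_one₀ (by positivity) ((div_le_one hN).2 hcN)

end LpNorm

theorem stmt8 (κ : ℕ) (hκ : 0 < κ) (p q : ℝ≥0∞) [Fact (1 ≤ p)] [Fact (1 ≤ q)]
    (hpq : p⁻¹ + q⁻¹ = 1)
    (Γ : Matrix (Fin κ) (Fin κ) ℝ) (hΓ : Γ.PosDef) :
    sInf {r : ℝ | ∃ h : Fin κ → ℝ, lpNorm p h = 1 ∧ r = h ⬝ᵥ Γ.mulVec h} =
      (sSup {r : ℝ | ∃ g : Fin κ → ℝ, lpNorm q g ≤ 1 ∧ r = g ⬝ᵥ Γ⁻¹.mulVec g})⁻¹ := by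
  have : p.HolderConjugate q := ENNReal.holderConjugate_iff.2 hpq
  obtain ⟨h₀, hh₀⟩ := exists_lpNorm_eq_one (p := p) hκ
  refine Real.sInf_eq_inv_sSup ⟨_, h₀, hh₀, rfl⟩ ?_ ?_ ?_ ?_
  · rintro _ ⟨h, -, rfl⟩
    simpa using hΓ.posSemidef.dotProduct_mulVec_nonneg h
  · refine ((isCompact_setOf_lpNorm_le_one (p := q)).image (f := fun g => g ⬝ᵥ Γ⁻¹ *ᵥ g)
      (by fun_prop)).bddAbove.mono ?_
    rintro _ ⟨g, hg, rfl⟩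
    exact ⟨g, hg, rfl⟩
  · rintro _ ⟨h, hh, rfl⟩
    obtain ⟨g, hg, hgh⟩ := hΓ.exists_lpNorm_le_one_one_le_mul (q := q) hh
    exact ⟨_, ⟨g, hg, rfl⟩, hgh⟩
  · rintro _ ⟨g, hg, rfl⟩ hc
    obtain ⟨h, hh, hgh⟩ := hΓ.exists_lpNorm_eq_one_mul_le_one (p := p) hg hc
    exact ⟨_, ⟨h, hh, rfl⟩, hgh⟩
end

section
/- Let $\zeta = (\zeta_1,\ldots,\zeta_L)$ be independent Poisson random variables with $\zeta_k \sim \mathrm{Poisson}(\nu_k)$, $\nu_k \ge 0$, and suppose $\max_k \nu_k \le \chi$. Then for every $h \in \mathbb{R}^L$, $\ln \mathbb{E}[\exp(h^T\zeta)] \le h^T\nu + \chi\,(e^{\|h\|_1} - \|h\|_1 - 1)$. -/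
/-!
The moment generating function of a Poisson variable gives
`ln 𝔼 exp(hᵀζ) = ∑ₖ νₖ (e^{hₖ} - 1) = hᵀν + ∑ₖ νₖ φ(hₖ)` with `φ x = eˣ - x - 1`.
Since `φ x ≤ φ |x|`, `0 ≤ νₖ ≤ χ`, and `φ` is superadditive on `[0, ∞)`
(`φ (a + b) - φ a - φ b = (eᵃ - 1)(eᵇ - 1)`), the remainder is at most `χ φ (‖h‖₁)`.
-/

open MeasureTheory ProbabilityTheory Finset Real
open scoped NNReal

lemma integral_exp_mul_poissonMeasure (r : ℝ≥0) (t : ℝ) :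
    ∫ n, exp (t * n) ∂poissonMeasure r = exp (r * (exp t - 1)) := by
  rw [integral_poissonMeasure]
  calc ∑' n : ℕ, (exp (-r) * r ^ n / n.factorial) • exp (t * n)
      = ∑' n : ℕ, exp (-r) * ((r * exp t) ^ n / n.factorial) := by
        congr with n
        rw [smul_eq_mul, mul_pow, ← exp_nat_mul, mul_comm t]
        ring
    _ = exp (-r) * exp (r * exp t) := by
        rw [tsum_mul_left, exp_eq_exp_ℝ, NormedSpace.exp_eq_tsum_div]
    _ = exp (r * (exp t - 1)) := by
        rw [← exp_add]
        ring_nf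

lemma integral_exp_sum_mul_of_iIndepFun_poisson {ι Ω : Type*} [Fintype ι] [MeasurableSpace Ω]
    {μ : Measure Ω} {ζ : ι → Ω → ℕ} (hindep : iIndepFun ζ μ) {ν : ι → ℝ≥0}
    (hlaw : ∀ k, μ.map (ζ k) = poissonMeasure (ν k)) (h : ι → ℝ) :
    ∫ ω, exp (∑ k, h k * ζ k ω) ∂μ = exp (∑ k, ν k * (exp (h k) - 1)) := by
  have hζ : ∀ k, AEMeasurable (ζ k) μ := fun k =>
    .of_map_ne_zero (by rw [hlaw k]; exact IsProbabilityMeasure.ne_zero _)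
  set X : ι → Ω → ℝ := fun k ω => h k * ζ k ω with hX
  have hXindep : iIndepFun X μ := hindep.comp (fun k n => h k * n) fun _ => measurable_from_top
  have hXmeas : ∀ k, AEMeasurable (X k) μ := fun k =>
    (measurable_from_top.comp_aemeasurable (hζ k)).const_mul (h k)
  have hmgf : ∀ k, mgf (X k) μ 1 = exp (ν k * (exp (h k) - 1)) := fun k => by
    rw [← integral_exp_mul_poissonMeasure, ← hlaw k,
      integral_map (hζ k) measurable_from_top.aestronglyMeasurable]
    simp [mgf, hX]
  calc ∫ ω, exp (∑ k, h k * ζ k ω) ∂μ = mgf (∑ k, X k) μ 1 := by simp [mgf, hX]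
    _ = ∏ k, mgf (X k) μ 1 := hXindep.mgf_sum₀ hXmeas _
    _ = exp (∑ k, ν k * (exp (h k) - 1)) := by simp_rw [hmgf, exp_sum]

lemma exp_sub_sub_one_le_exp_abs (x : ℝ) : exp x - x - 1 ≤ exp |x| - |x| - 1 := by
  rcases le_or_gt 0 x with hx | hx
  · rw [abs_of_nonneg hx]
  · have hsinh : sinh x < x := sinh_lt_self_iff.mpr hx
    rw [sinh_eq] at hsinh
    rw [abs_of_neg hx]
    linarith

lemma exp_sub_sub_one_superadditive {a b : ℝ} (ha : 0 ≤ a) (hb : 0 ≤ b) :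
    (exp a - a - 1) + (exp b - b - 1) ≤ exp (a + b) - (a + b) - 1 := by
  have hprod : 0 ≤ (exp a - 1) * (exp b - 1) :=
    mul_nonneg (sub_nonneg.mpr (one_le_exp ha)) (sub_nonneg.mpr (one_le_exp hb))
  rw [exp_add]
  linarith

lemma sum_exp_sub_sub_one_le {ι : Type*} (s : Finset ι) {g : ι → ℝ} (hg : ∀ i ∈ s, 0 ≤ g i) :
    ∑ i ∈ s, (exp (g i) - g i - 1) ≤ exp (∑ i ∈ s, g i) - ∑ i ∈ s, g i - 1 := by
  have := le_sum_of_subadditive_on_pred (fun x => -(exp x - x - 1)) (0 ≤ ·) (by simp)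
    (fun a b ha hb => by linarith [exp_sub_sub_one_superadditive ha hb])
    (fun _ _ => add_nonneg) g hg
  simpa only [sum_neg_distrib, neg_le_neg_iff] using this

lemma sum_mul_exp_sub_sub_one_le {ι : Type*} (s : Finset ι) {w : ι → ℝ} {χ : ℝ}
    (hw : ∀ i ∈ s, 0 ≤ w i) (hwχ : ∀ i ∈ s, w i ≤ χ) (h : ι → ℝ) :
    ∑ i ∈ s, w i * (exp (h i) - h i - 1) ≤
      χ * (exp (∑ i ∈ s, |h i|) - ∑ i ∈ s, |h i| - 1) := by
  obtain rfl | ⟨j, hj⟩ := s.eq_empty_or_nonempty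
  · simp
  have hχ : 0 ≤ χ := (hw j hj).trans (hwχ j hj)
  calc ∑ i ∈ s, w i * (exp (h i) - h i - 1)
      ≤ ∑ i ∈ s, χ * (exp |h i| - |h i| - 1) := sum_le_sum fun i hi =>
        mul_le_mul (hwχ i hi) (exp_sub_sub_one_le_exp_abs (h i))
          (by linarith [add_one_le_exp (h i)]) hχ
    _ = χ * ∑ i ∈ s, (exp |h i| - |h i| - 1) := (mul_sum ..).symm
    _ ≤ χ * (exp (∑ i ∈ s, |h i|) - ∑ i ∈ s, |h i| - 1) :=
        mul_le_mul_of_nonneg_left (sum_exp_sub_sub_one_le s fun i _ => abs_nonneg (h i)) hχ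

theorem stmt14_general {Ω : Type*} [MeasurableSpace Ω] (μ : Measure Ω)
    (L : ℕ) (ζ : Fin L → Ω → ℕ)
    (hindep : iIndepFun ζ μ)
    (ν : Fin L → ℝ≥0)
    (hlaw : ∀ k, Measure.map (ζ k) μ = poissonMeasure (ν k))
    (χ : ℝ) (hχ : ∀ k, (ν k : ℝ) ≤ χ) :
    ∀ h : Fin L → ℝ,
      Real.log (∫ ω, Real.exp (∑ k, h k * (ζ k ω : ℝ)) ∂μ) ≤
        (∑ k, h k * (ν k : ℝ)) +
          χ * (Real.exp (∑ k, |h k|) - (∑ k, |h k|) - 1) := by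
  intro h
  rw [integral_exp_sum_mul_of_iIndepFun_poisson hindep hlaw, Real.log_exp]
  have hsplit : ∑ k, (ν k : ℝ) * (exp (h k) - 1) =
      ∑ k, h k * (ν k : ℝ) + ∑ k, (ν k : ℝ) * (exp (h k) - h k - 1) := by
    rw [← sum_add_distrib]
    exact sum_congr rfl fun k _ => by ring
  have hbound := sum_mul_exp_sub_sub_one_le univ (fun k _ => (ν k).coe_nonneg) (fun k _ => hχ k) h
  linarith

theorem stmt14 {Ω : Type*} [MeasurableSpace Ω] (μ : Measure Ω) [IsProbabilityMeasure μ]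
    (L : ℕ) (ζ : Fin L → Ω → ℕ) (hmeas : ∀ k, Measurable (ζ k))
    (hindep : iIndepFun ζ μ)
    (ν : Fin L → ℝ≥0)
    (hlaw : ∀ k, Measure.map (ζ k) μ = poissonMeasure (ν k))
    (χ : ℝ) (hχ : ∀ k, (ν k : ℝ) ≤ χ) :
    ∀ h : Fin L → ℝ,
      Real.log (∫ ω, Real.exp (∑ k, h k * (ζ k ω : ℝ)) ∂μ) ≤
        (∑ k, h k * (ν k : ℝ)) +
          χ * (Real.exp (∑ k, |h k|) - (∑ k, |h k|) - 1) :=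
  stmt14_general μ L ζ hindep ν hlaw χ hχ
end
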